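/- arXiv:1704.01858 — 2 statements merged into one kernel-verified Lean document; each statement's English description precedes it below -/
import Mathlib

section
/- Let X be separable w.r.t. a ground-truth clustering C* with K clusters. If a cluster tree T with dendrogram purity 1 has more than K leaves (so L > K with L the leaf bound), then by the pigeonhole principle there exists a pure collapsible node (an internal node whose two children are leaves belonging to the same ground-truth cluster), and moreover the maximum pairwise distance between leaves of any pure collapsible node is strictly less than that of any impure collapsible node. -/
open scoped Classical

inductive CTree (α : Type*) where
  | leaf (x : α) : CTree α
  | node (l r : CTree α) : CTree α

namespace CTree

variable {α : Type*}

/-- The set of data points (descendant leaves) of a node. -/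
noncomputable def lvs : CTree α → Finset α
  | leaf x => {x}
  | node l r => lvs l ∪ lvs r

theorem lvs_nonempty (t : CTree α) : t.lvs.Nonempty := by
  induction t with
  | leaf x => exact ⟨x, by simp [lvs]⟩
  | node l r ihl ihr => exact ihl.mono (by simp [lvs])

/-- `Sub s t` : `s` is a subtree (node) of `t`. -/
inductive Sub : CTree α → CTree α → Prop
  | refl (t : CTree α) : Sub t t
  | left {s l r : CTree α} : Sub s l → Sub s (node l r)
  | right {s l r : CTree α} : Sub s r → Sub s (node l r)

/-- Least common ancestor (as a subtree) of two data points. -/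
noncomputable def lca : CTree α → α → α → CTree α
  | leaf a, _, _ => leaf a
  | node l r, x, y =>
      if x ∈ lvs l ∧ y ∈ lvs l then lca l x y
      else if x ∈ lvs r ∧ y ∈ lvs r then lca r x y
      else node l r

/-- Dendrogram purity 1: for every same-cluster pair, all leaves below their
least common ancestor belong to that cluster. -/
def PurityOne (C : α → ℕ) (t : CTree α) : Prop :=
  ∀ x ∈ t.lvs, ∀ y ∈ t.lvs, x ≠ y → C x = C y → ∀ z ∈ (t.lca x y).lvs, C z = C x

/-- A dataset `X` is separable w.r.t. a ground-truth clustering `C`: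
every within-cluster distance is strictly smaller than every between-cluster distance. -/
def Separable [MetricSpace α] (X : Finset α) (C : α → ℕ) : Prop :=
  ∀ x ∈ X, ∀ y ∈ X, ∀ x' ∈ X, ∀ y' ∈ X,
    x ≠ y → C x = C y → C x' ≠ C y' → dist x y < dist x' y'

/-- A node `v` with sibling `v'` and aunt `a` is masked if some `x ∈ lvs v` is farther
from some point of `v'` than from some point of `a`
(i.e. `max_{y ∈ lvs v'} ‖x-y‖ > min_{z ∈ lvs a} ‖x-z‖`). -/
def Masked [MetricSpace α] (v v' a : CTree α) : Prop :=
  ∃ x ∈ v.lvs,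
    (a.lvs.inf' (lvs_nonempty a) fun z => dist x z) <
      (v'.lvs.sup' (lvs_nonempty v') fun y => dist x y)

end CTree

abbrev Euc (d : ℕ) := EuclideanSpace ℝ (Fin d)

namespace CTree

variable {α : Type*}

/-- Number of leaf nodes of the tree. -/
def numLeaves : CTree α → ℕ
  | leaf _ => 1
  | node l r => numLeaves l + numLeaves r

theorem Sub.trans' {a b c : CTree α} (h1 : Sub a b) (h2 : Sub b c) : Sub a c := by
  induction h2 with
  | refl => exact h1
  | left _ ih => exact Sub.left ih
  | right _ ih => exact Sub.right ih

theorem lvs_subset_of_sub {s t : CTree α} (h : Sub s t) : s.lvs ⊆ t.lvs := by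
  induction h with
  | refl => exact Finset.Subset.refl _
  | left _ ih => exact ih.trans (by simp [lvs])
  | right _ ih => exact ih.trans (by simp [lvs])

theorem lca_sub (t : CTree α) (x y : α) : Sub (t.lca x y) t := by
  induction t with
  | leaf a => exact Sub.refl _
  | node l r ihl ihr =>
    rw [lca]
    split
    · exact Sub.left ihl
    · split
      · exact Sub.right ihr
      · exact Sub.refl _

theorem mem_lca {t : CTree α} {x y : α} (hx : x ∈ t.lvs) (hy : y ∈ t.lvs) :
    x ∈ (t.lca x y).lvs ∧ y ∈ (t.lca x y).lvs := by
  induction t with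
  | leaf a => exact ⟨hx, hy⟩
  | node l r ihl ihr =>
    rw [lca]
    split
    · next h => exact ihl h.1 h.2
    · split
      · next h => exact ihr h.1 h.2
      · exact ⟨hx, hy⟩

theorem lca_isNode {t : CTree α} {x y : α} (hx : x ∈ t.lvs) (hy : y ∈ t.lvs)
    (hxy : x ≠ y) : ∃ l r, t.lca x y = node l r := by
  induction t with
  | leaf a =>
    simp [lvs] at hx hy
    exact absurd (hx.trans hy.symm) hxy
  | node l r ihl ihr =>
    rw [lca]
    split
    · next h => exact ihl h.1 h.2
    · split
      · next h => exact ihr h.1 h.2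
      · exact ⟨l, r, rfl⟩

theorem exists_collapsible : ∀ (l r : CTree α),
    ∃ x y, Sub (node (leaf x) (leaf y)) (node l r)
  | leaf a, leaf b => ⟨a, b, Sub.refl _⟩
  | leaf _, node r1 r2 =>
      have ⟨x, y, h⟩ := exists_collapsible r1 r2
      ⟨x, y, Sub.right h⟩
  | node l1 l2, _ =>
      have ⟨x, y, h⟩ := exists_collapsible l1 l2
      ⟨x, y, Sub.left h⟩
termination_by l r => sizeOf l + sizeOf r
decreasing_by all_goals simp; omega

end CTree

open CTree in
/-- if a cluster tree of dendrogram purity 1 over a separable dataset with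
`K` ground-truth clusters has more than `K` (distinct) leaves, then some collapsible node
is pure (its two leaf-children lie in the same cluster), and every pure collapsible node
has strictly smaller maximal within-node distance than every impure collapsible node. -/
theorem pure_collapsible_exists_and_precedes {d : ℕ} (C : Euc d → ℕ) (T : CTree (Euc d))
    (hsep : Separable T.lvs C) (hpure : PurityOne C T)
    (hdistinct : T.lvs.card = T.numLeaves)
    (hK : (T.lvs.image C).card < T.numLeaves) :
    (∃ x y : Euc d, Sub (CTree.node (CTree.leaf x) (CTree.leaf y)) T ∧ C x = C y) ∧
    (∀ x y x' y' : Euc d,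
      Sub (CTree.node (CTree.leaf x) (CTree.leaf y)) T →
      Sub (CTree.node (CTree.leaf x') (CTree.leaf y')) T →
      C x = C y → C x' ≠ C y' → dist x y < dist x' y') := by
  constructor
  · -- pigeonhole: two distinct leaves in same cluster
    have hcard : (T.lvs.image C).card < T.lvs.card := hdistinct ▸ hK
    have : ¬ Set.InjOn C T.lvs := by
      intro hinj
      rw [Finset.card_image_of_injOn hinj] at hcard
      exact lt_irrefl _ hcard
    rw [Set.InjOn] at this
    push_neg at this
    obtain ⟨x, hx, y, hy, hCxy, hxy⟩ := this
    obtain ⟨l, r, hlr⟩ := lca_isNode hx hy hxy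
    obtain ⟨a, b, hab⟩ := exists_collapsible l r
    have habsub : Sub (CTree.node (CTree.leaf a) (CTree.leaf b)) (T.lca x y) :=
      hlr ▸ hab
    have hsub : Sub (CTree.node (CTree.leaf a) (CTree.leaf b)) T :=
      habsub.trans' (lca_sub T x y)
    have hz := hpure x hx y hy hxy hCxy
    have ha : a ∈ (T.lca x y).lvs :=
      lvs_subset_of_sub habsub (by simp [lvs])
    have hb : b ∈ (T.lca x y).lvs :=
      lvs_subset_of_sub habsub (by simp [lvs])
    exact ⟨a, b, hsub, (hz a ha).trans (hz b hb).symm⟩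
  · intro x y x' y' hs hs' hCxy hCx'y'
    have hx : x ∈ T.lvs := lvs_subset_of_sub hs (by simp [lvs])
    have hy : y ∈ T.lvs := lvs_subset_of_sub hs (by simp [lvs])
    have hx' : x' ∈ T.lvs := lvs_subset_of_sub hs' (by simp [lvs])
    have hy' : y' ∈ T.lvs := lvs_subset_of_sub hs' (by simp [lvs])
    by_cases hxy : x = y
    · subst hxy
      rw [dist_self]
      exact dist_pos.mpr (fun h => hCx'y' (by rw [h]))
    · exact hsep x hx y hy x' hx' y' hy' hxy hCxy hCx'y'
end

section
/- Under separability of X w.r.t. C*, hierarchical agglomerative clustering with complete linkage recovers C*: every merge performed while more than K subsets exist joins two subsets lying in the same ground-truth cluster, and the partition into K subsets equals C*. -/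
open scoped Classical

/-- One merge step of hierarchical agglomerative clustering with linkage `link`:
two distinct current subsets minimizing the linkage over all current pairs are merged. -/
inductive HACStep {α : Type*} (link : Finset α → Finset α → ℝ) :
    Finset (Finset α) → Finset (Finset α) → Prop
  | merge (P : Finset (Finset α)) (A B : Finset α)
      (hA : A ∈ P) (hB : B ∈ P) (hne : A ≠ B)
      (hmin : ∀ A' ∈ P, ∀ B' ∈ P, A' ≠ B' → link A B ≤ link A' B') :
      HACStep link P (insert (A ∪ B) ((P.erase A).erase B))

/-- Single linkage: minimum pairwise distance between the two subsets. -/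
noncomputable def singleLink {α : Type*} [MetricSpace α] (A B : Finset α) : ℝ :=
  sInf (Set.image2 dist (↑A : Set α) (↑B : Set α))

/-- Complete linkage: maximum pairwise distance between the two subsets. -/
noncomputable def completeLink {α : Type*} [MetricSpace α] (A B : Finset α) : ℝ :=
  sSup (Set.image2 dist (↑A : Set α) (↑B : Set α))

/-- Average linkage: average pairwise distance between the two subsets. -/
noncomputable def averageLink {α : Type*} [MetricSpace α] (A B : Finset α) : ℝ :=
  (∑ a ∈ A, ∑ b ∈ B, dist a b) / ((A.card : ℝ) * (B.card : ℝ))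

/-! While more blocks than clusters remain, two distinct blocks lie in a common cluster
(pigeonhole), so their complete linkage is at most the largest within-cluster distance, whereas
any two points of different clusters are farther apart than that. Hence the pair minimizing the
linkage is never split between clusters and the blocks stay pure; and a pure partition of `X`
with exactly as many blocks as clusters must be the ground-truth clustering. -/

variable {α ι : Type*}

theorem dist_le_completeLink [MetricSpace α] {A B : Finset α} {a b : α} (ha : a ∈ A)
    (hb : b ∈ B) : dist a b ≤ completeLink A B :=
  le_csSup (A.finite_toSet.image2 _ B.finite_toSet).bddAbove (Set.mem_image2_of_mem ha hb)

theorem completeLink_lt [MetricSpace α] {A B : Finset α} (hA : A.Nonempty) (hB : B.Nonempty)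
    {r : ℝ} (h : ∀ a ∈ A, ∀ b ∈ B, dist a b < r) : completeLink A B < r := by
  obtain ⟨a, ha, b, hb, hab⟩ :=
    (Set.Nonempty.image2 (f := dist) hA hB).csSup_mem (A.finite_toSet.image2 _ B.finite_toSet)
  rw [completeLink, ← hab]
  exact h a ha b hb

structure IsPartition (X : Finset α) (P : Finset (Finset α)) : Prop where
  nonempty : ∀ A ∈ P, A.Nonempty
  subset : ∀ A ∈ P, A ⊆ X
  disjoint : ∀ A ∈ P, ∀ B ∈ P, A ≠ B → Disjoint A B
  cover : ∀ x ∈ X, ∃ A ∈ P, x ∈ A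

def IsPure (C : α → ι) (P : Finset (Finset α)) : Prop :=
  ∀ A ∈ P, ∀ a ∈ A, ∀ b ∈ A, C a = C b

theorem mem_merge {P : Finset (Finset α)} {A B S : Finset α} :
    S ∈ insert (A ∪ B) ((P.erase A).erase B) ↔ S = A ∪ B ∨ S ≠ B ∧ S ≠ A ∧ S ∈ P := by
  simp only [Finset.mem_insert, Finset.mem_erase]

theorem isPartition_singletons [DecidableEq α] (X : Finset α) :
    IsPartition X (X.image fun x => {x}) where
  nonempty := by
    simp only [Finset.mem_image]
    rintro _ ⟨x, -, rfl⟩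
    exact Finset.singleton_nonempty x
  subset := by
    simp only [Finset.mem_image]
    rintro _ ⟨x, hx, rfl⟩
    exact Finset.singleton_subset_iff.2 hx
  disjoint := by
    simp only [Finset.mem_image]
    rintro _ ⟨x, -, rfl⟩ _ ⟨y, -, rfl⟩ hxy
    exact Finset.disjoint_singleton.2 fun h => hxy (h ▸ rfl)
  cover x hx := ⟨{x}, Finset.mem_image_of_mem _ hx, Finset.mem_singleton_self x⟩

theorem isPure_singletons [DecidableEq α] (C : α → ι) (X : Finset α) :
    IsPure C (X.image fun x => {x}) := by
  simp only [IsPure, Finset.mem_image]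
  rintro _ ⟨x, -, rfl⟩ a ha b hb
  rw [Finset.mem_singleton.1 ha, Finset.mem_singleton.1 hb]

namespace IsPartition

variable {X : Finset α} {P : Finset (Finset α)} {A B : Finset α}

theorem merge (hP : IsPartition X P) (hA : A ∈ P) (hB : B ∈ P) :
    IsPartition X (insert (A ∪ B) ((P.erase A).erase B)) where
  nonempty S hS := by
    rcases mem_merge.1 hS with rfl | ⟨-, -, hS⟩
    · exact (hP.nonempty A hA).mono Finset.subset_union_left
    · exact hP.nonempty S hS
  subset S hS := by
    rcases mem_merge.1 hS with rfl | ⟨-, -, hS⟩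
    · exact Finset.union_subset (hP.subset A hA) (hP.subset B hB)
    · exact hP.subset S hS
  disjoint S hS T hT hST := by
    rcases mem_merge.1 hS with rfl | ⟨hSB, hSA, hS⟩ <;>
      rcases mem_merge.1 hT with rfl | ⟨hTB, hTA, hT⟩
    · exact absurd rfl hST
    · exact Finset.disjoint_union_left.2
        ⟨hP.disjoint A hA T hT hTA.symm, hP.disjoint B hB T hT hTB.symm⟩
    · exact Finset.disjoint_union_right.2 ⟨hP.disjoint S hS A hA hSA, hP.disjoint S hS B hB hSB⟩
    · exact hP.disjoint S hS T hT hST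
  cover x hx := by
    obtain ⟨S, hS, hxS⟩ := hP.cover x hx
    by_cases hSA : S = A
    · exact ⟨A ∪ B, Finset.mem_insert_self _ _, Finset.mem_union_left _ (hSA ▸ hxS)⟩
    by_cases hSB : S = B
    · exact ⟨A ∪ B, Finset.mem_insert_self _ _, Finset.mem_union_right _ (hSB ▸ hxS)⟩
    exact ⟨S, mem_merge.2 (Or.inr ⟨hSB, hSA, hS⟩), hxS⟩

theorem card_merge (hP : IsPartition X P) (hA : A ∈ P) (hB : B ∈ P) (hAB : A ≠ B) :
    (insert (A ∪ B) ((P.erase A).erase B)).card + 1 = P.card := by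
  have hnotMem : A ∪ B ∉ (P.erase A).erase B := by
    intro hU
    obtain ⟨-, hUA, hU⟩ : A ∪ B ≠ B ∧ A ∪ B ≠ A ∧ A ∪ B ∈ P := by
      simpa only [Finset.mem_erase] using hU
    have hAA : Disjoint A A := (Finset.disjoint_union_left.1 (hP.disjoint _ hU A hA hUA)).1
    exact (hP.nonempty A hA).ne_empty (disjoint_self.1 hAA)
  rw [Finset.card_insert_of_notMem hnotMem,
    Finset.card_erase_of_mem (Finset.mem_erase.2 ⟨hAB.symm, hB⟩), Finset.card_erase_of_mem hA]
  have : 2 ≤ P.card := Finset.one_lt_card.2 ⟨A, hA, B, hB, hAB⟩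
  omega

theorem hacStep {link : Finset α → Finset α → ℝ} {P' : Finset (Finset α)}
    (hP : IsPartition X P) (h : HACStep link P P') : IsPartition X P' := by
  obtain ⟨A, B, hA, hB, -, -⟩ := h
  exact hP.merge hA hB

theorem card_hacStep {link : Finset α → Finset α → ℝ} {P' : Finset (Finset α)}
    (hP : IsPartition X P) (h : HACStep link P P') : P'.card + 1 = P.card := by
  obtain ⟨A, B, hA, hB, hAB, -⟩ := h
  exact hP.card_merge hA hB hAB

end IsPartition

namespace IsPure

variable {C : α → ι} {P : Finset (Finset α)} {A B : Finset α}

theorem merge (hP : IsPure C P) (hA : A ∈ P) (hB : B ∈ P)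
    (hAB : ∀ a ∈ A, ∀ b ∈ B, C a = C b) : IsPure C (insert (A ∪ B) ((P.erase A).erase B)) := by
  intro S hS s hs t ht
  rcases mem_merge.1 hS with rfl | ⟨-, -, hS⟩
  · rcases Finset.mem_union.1 hs with hs | hs <;> rcases Finset.mem_union.1 ht with ht | ht
    · exact hP A hA s hs t ht
    · exact hAB s hs t ht
    · exact (hAB t ht s hs).symm
    · exact hP B hB s hs t ht
  · exact hP S hS s hs t ht

theorem image_eq_singleton [DecidableEq ι] (hP : IsPure C P) (hA : A ∈ P) {a : α} (ha : a ∈ A) :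
    A.image C = {C a} :=
  Finset.eq_singleton_iff_unique_mem.2
    ⟨Finset.mem_image_of_mem C ha, by simpa using fun b hb => hP A hA b hb a ha⟩

end IsPure

namespace IsPartition

variable [DecidableEq ι] {C : α → ι} {X : Finset α} {P : Finset (Finset α)}

theorem image_image_eq (hX : IsPartition X P) (hP : IsPure C P) :
    P.image (Finset.image C) = (X.image C).image singleton := by
  ext T
  simp only [Finset.mem_image]
  constructor
  · rintro ⟨A, hA, rfl⟩
    obtain ⟨a, ha⟩ := hX.nonempty A hA
    exact ⟨C a, ⟨a, hX.subset A hA ha, rfl⟩, (hP.image_eq_singleton hA ha).symm⟩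
  · rintro ⟨_, ⟨x, hx, rfl⟩, rfl⟩
    obtain ⟨A, hA, hxA⟩ := hX.cover x hx
    exact ⟨A, hA, hP.image_eq_singleton hA hxA⟩

theorem card_image_image (hX : IsPartition X P) (hP : IsPure C P) :
    (P.image (Finset.image C)).card = (X.image C).card := by
  rw [hX.image_image_eq hP, Finset.card_image_of_injective _ Finset.singleton_injective]

theorem exists_ne_of_card_lt (hX : IsPartition X P) (hP : IsPure C P)
    (h : (X.image C).card < P.card) :
    ∃ A ∈ P, ∃ B ∈ P, A ≠ B ∧ ∀ a ∈ A, ∀ b ∈ B, C a = C b := by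
  obtain ⟨A, hA, B, hB, hAB, hCAB⟩ :=
    Finset.exists_ne_map_eq_of_card_image_lt ((hX.card_image_image hP).trans_lt h)
  refine ⟨A, hA, B, hB, hAB, fun a ha b hb => Finset.singleton_injective ?_⟩
  rw [← hP.image_eq_singleton hA ha, ← hP.image_eq_singleton hB hb, hCAB]

theorem eq_fibers_of_card_eq [DecidableEq α] (hX : IsPartition X P) (hP : IsPure C P)
    (h : P.card = (X.image C).card) : P = X.image fun x => X.filter fun y => C y = C x := by
  have hinj : Set.InjOn (Finset.image C) P :=
    Finset.card_image_iff.1 ((hX.card_image_image hP).trans h.symm)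
  have hblock : ∀ A ∈ P, ∀ a ∈ A, A = X.filter fun y => C y = C a := by
    intro A hA a ha
    ext y
    rw [Finset.mem_filter]
    refine ⟨fun hy => ⟨hX.subset A hA hy, hP A hA y hy a ha⟩, fun ⟨hy, hya⟩ => ?_⟩
    obtain ⟨B, hB, hyB⟩ := hX.cover y hy
    have hBA : B = A := hinj hB hA <| by
      rw [hP.image_eq_singleton hB hyB, hP.image_eq_singleton hA ha, hya]
    exact hBA ▸ hyB
  ext A
  rw [Finset.mem_image]
  constructor
  · intro hA
    obtain ⟨a, ha⟩ := hX.nonempty A hA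
    exact ⟨a, hX.subset A hA ha, (hblock A hA a ha).symm⟩
  · rintro ⟨x, hx, rfl⟩
    obtain ⟨A, hA, hxA⟩ := hX.cover x hx
    exact hblock A hA x hxA ▸ hA

end IsPartition

namespace CTree.Separable

variable [MetricSpace α] {X : Finset α} {C : α → ℕ}

theorem completeLink_lt_dist (hsep : Separable X C) {A B : Finset α} (hA : A.Nonempty)
    (hB : B.Nonempty) (hAX : A ⊆ X) (hBX : B ⊆ X) (hdisj : Disjoint A B)
    (hAB : ∀ a ∈ A, ∀ b ∈ B, C a = C b) {x y : α} (hx : x ∈ X) (hy : y ∈ X)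
    (hxy : C x ≠ C y) : completeLink A B < dist x y :=
  completeLink_lt hA hB fun a ha b hb =>
    hsep a (hAX ha) b (hBX hb) x hx y hy (fun h => Finset.disjoint_left.1 hdisj ha (h ▸ hb))
      (hAB a ha b hb) hxy

theorem isPure_hacStep (hsep : Separable X C) {P P' : Finset (Finset α)}
    (hX : IsPartition X P) (hP : IsPure C P) (h : HACStep completeLink P P')
    (hcard : (X.image C).card < P.card) : IsPure C P' := by
  obtain ⟨A, B, hA, hB, -, hmin⟩ := h
  obtain ⟨A₀, hA₀, B₀, hB₀, hne₀, hsame⟩ := hX.exists_ne_of_card_lt hP hcard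
  refine hP.merge hA hB fun a ha b hb => by_contra fun hab => ?_
  have hlt := hsep.completeLink_lt_dist (hX.nonempty A₀ hA₀) (hX.nonempty B₀ hB₀)
    (hX.subset A₀ hA₀) (hX.subset B₀ hB₀) (hX.disjoint A₀ hA₀ B₀ hB₀ hne₀) hsame
    (hX.subset A hA ha) (hX.subset B hB hb) hab
  exact (hmin A₀ hA₀ B₀ hB₀ hne₀).not_gt (hlt.trans_le (dist_le_completeLink ha hb))

theorem isPartition_isPure_of_reflTransGen (hsep : Separable X C) {P₀ P : Finset (Finset α)}
    (hX₀ : IsPartition X P₀) (hP₀ : IsPure C P₀)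
    (h : Relation.ReflTransGen (HACStep completeLink) P₀ P) :
    IsPartition X P ∧ ((X.image C).card ≤ P.card → IsPure C P) := by
  induction h with
  | refl => exact ⟨hX₀, fun _ => hP₀⟩
  | tail _ hstep ih =>
    obtain ⟨hX, hP⟩ := ih
    have hcard := hX.card_hacStep hstep
    exact ⟨hX.hacStep hstep, fun hK => hsep.isPure_hacStep hX (hP (by omega)) hstep (by omega)⟩

end CTree.Separable

open CTree in
/-- under separability, hierarchical agglomerative clustering with
complete linkage only merges subsets lying in a common ground-truth cluster while more
than `K` subsets remain, so every reachable partition with at least `K` subsets is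
cluster-pure, and the reachable partition with exactly `K` subsets is exactly the
ground-truth clustering. -/
theorem complete_linkage_recovers_ground_truth {d : ℕ} (X : Finset (Euc d))
    (C : Euc d → ℕ) (hsep : Separable X C) :
    (∀ P, Relation.ReflTransGen (HACStep (completeLink))
        (X.image fun x => ({x} : Finset (Euc d))) P →
      (X.image C).card ≤ P.card → ∀ A ∈ P, ∀ a ∈ A, ∀ b ∈ A, C a = C b) ∧
    (∀ P, Relation.ReflTransGen (HACStep (completeLink))
        (X.image fun x => ({x} : Finset (Euc d))) P →
      P.card = (X.image C).card →
      P = X.image fun x => X.filter fun y => C y = C x) := by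
  have hX₀ := isPartition_singletons X
  have hP₀ := isPure_singletons C X
  refine ⟨fun P hP hK => (hsep.isPartition_isPure_of_reflTransGen hX₀ hP₀ hP).2 hK,
    fun P hP hK => ?_⟩
  obtain ⟨hX, hpure⟩ := hsep.isPartition_isPure_of_reflTransGen hX₀ hP₀ hP
  exact hX.eq_fibers_of_card_eq (hpure hK.ge) hK
end
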